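/- arXiv:2406.08985 — 2 statements merged into one kernel-verified Lean document; each statement's English description precedes it below -/
import Mathlib

section
/- For every finite simple graph G and every edge {v, w} ∈ E(G), it holds that tw(Subdiv(G, v, w)) = tw(G) and pw(G) ≤ pw(Subdiv(G, v, w)) ≤ pw(G) + 1, where Subdiv(G, v, w) is the edge subdivision of {v, w} in G. -/
open SimpleGraph

/-- `(T, X)` is a tree-decomposition of the graph `G`. -/
def IsTreeDecomp {V ι : Type} (G : SimpleGraph V) (T : SimpleGraph ι)
    (X : ι → Finset V) : Prop :=
  T.IsTree ∧
  (∀ v : V, ∃ u : ι, v ∈ X u) ∧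
  (∀ v w : V, G.Adj v w → ∃ u : ι, v ∈ X u ∧ w ∈ X u) ∧
  (∀ v : V, (T.induce {u : ι | v ∈ X u}).Connected)

/-- The tree-width of `G`: the minimum over all tree-decompositions of
(maximum bag size − 1). -/
noncomputable def treewidth {V : Type} (G : SimpleGraph V) : ℕ :=
  sInf { k | ∃ (ι : Type) (T : SimpleGraph ι) (X : ι → Finset V),
    IsTreeDecomp G T X ∧ sSup (Set.range fun u => (X u).card) - 1 = k }

/-- `X` is a path-decomposition of the graph `G`. -/
def IsPathDecomp {V : Type} {r : ℕ} (G : SimpleGraph V) (X : Fin r → Finset V) : Prop :=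
  (∀ v : V, ∃ i, v ∈ X i) ∧
  (∀ v w : V, G.Adj v w → ∃ i, v ∈ X i ∧ w ∈ X i) ∧
  (∀ i j l : Fin r, i < j → j < l → ∀ x, x ∈ X i → x ∈ X l → x ∈ X j)

/-- The path-width of `G`: the minimum over all path-decompositions of
(maximum bag size − 1). -/
noncomputable def pathwidth {V : Type} (G : SimpleGraph V) : ℕ :=
  sInf { k | ∃ (r : ℕ) (X : Fin r → Finset V),
    IsPathDecomp G X ∧ sSup (Set.range fun i => (X i).card) - 1 = k }

/-- `subdiv G v w` is the edge subdivision `Subdiv(G, v, w)`: the edge `{v, w}` is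
removed and a new vertex (modelled as `none`) is added, adjacent exactly to `v` and `w`. -/
def subdiv {V : Type} (G : SimpleGraph V) (v w : V) : SimpleGraph (Option V) where
  Adj x y :=
    match x, y with
    | some a, some b => G.Adj a b ∧ ¬(a = v ∧ b = w) ∧ ¬(a = w ∧ b = v)
    | some a, none => a = v ∨ a = w
    | none, some b => b = v ∨ b = w
    | none, none => False
  symm := by
    constructor
    rintro (_ | a) (_ | b) h <;> simp_all [SimpleGraph.adj_comm] <;> tauto
  loopless := by
    constructor
    rintro (_ | a) h <;> simp_all

/-! Contracting the edge `{none, w}` of the subdivision, i.e. replacing `none` by `w` in every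
bag, turns its tree- and path-decompositions into decompositions of `G` of no larger width.
Conversely, adding `none` to a bag containing `v` and `w` turns a path-decomposition of `G` into
one of the subdivision. For tree-decompositions of width at least two it suffices to attach a
new leaf with bag `{v, w, none}` to such a bag. In width one every bag containing `v` and `w` is
`{v, w}`, and these bags form a subtree `A`; there `w` is replaced by `none`, and the branches
that hang off `A` through bags containing `w` are cut off and re-hung on a new node with bag
`{w, none}`, itself attached to `A`. -/

section Width

variable {V : Type} [Fintype V]

lemma sSup_card_le_iff {κ : Type} (X : κ → Finset V) {n : ℕ} :
    sSup (Set.range fun u => (X u).card) ≤ n ↔ ∀ u, (X u).card ≤ n := by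
  have hbdd : BddAbove (Set.range fun u => (X u).card) :=
    ⟨Fintype.card V, by rintro _ ⟨u, rfl⟩; exact Finset.card_le_univ _⟩
  rw [csSup_le_iff' hbdd, Set.forall_mem_range]

lemma treewidth_le_iff {G : SimpleGraph V} {k : ℕ} :
    treewidth G ≤ k ↔ ∃ (ι : Type) (T : SimpleGraph ι) (X : ι → Finset V),
      IsTreeDecomp G T X ∧ ∀ u, (X u).card ≤ k + 1 := by
  unfold treewidth
  constructor
  · intro hk
    have htrivial : IsTreeDecomp G (⊥ : SimpleGraph Unit) fun _ => Finset.univ :=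
      ⟨.of_subsingleton, fun _ => ⟨(), Finset.mem_univ _⟩,
        fun _ _ _ => ⟨(), Finset.mem_univ _, Finset.mem_univ _⟩,
        fun _ => (connected_iff _).mpr ⟨fun _ _ => .of_subsingleton, ⟨⟨(), Finset.mem_univ _⟩⟩⟩⟩
    obtain ⟨ι, T, X, hX, hw⟩ := Nat.sInf_mem (s := {m | ∃ (ι : Type) (T : SimpleGraph ι)
      (X : ι → Finset V), IsTreeDecomp G T X ∧ sSup (Set.range fun u => (X u).card) - 1 = m})
      ⟨_, Unit, ⊥, _, htrivial, rfl⟩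
    refine ⟨ι, T, X, hX, (sSup_card_le_iff X).mp ?_⟩
    omega
  · rintro ⟨ι, T, X, hX, hcard⟩
    have := (sSup_card_le_iff X).mpr hcard
    exact le_trans (Nat.sInf_le ⟨ι, T, X, hX, rfl⟩) (by omega)

lemma pathwidth_le_iff {G : SimpleGraph V} {k : ℕ} :
    pathwidth G ≤ k ↔ ∃ (r : ℕ) (X : Fin r → Finset V),
      IsPathDecomp G X ∧ ∀ i, (X i).card ≤ k + 1 := by
  unfold pathwidth
  constructor
  · intro hk
    have htrivial : IsPathDecomp G fun _ : Fin 1 => Finset.univ :=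
      ⟨fun _ => ⟨0, Finset.mem_univ _⟩, fun _ _ _ => ⟨0, Finset.mem_univ _, Finset.mem_univ _⟩,
        fun i j l hij hjl => by omega⟩
    obtain ⟨r, X, hX, hw⟩ := Nat.sInf_mem (s := {m | ∃ (r : ℕ) (X : Fin r → Finset V),
      IsPathDecomp G X ∧ sSup (Set.range fun i => (X i).card) - 1 = m}) ⟨_, 1, _, htrivial, rfl⟩
    refine ⟨r, X, hX, (sSup_card_le_iff X).mp ?_⟩
    omega
  · rintro ⟨r, X, hX, hcard⟩
    have := (sSup_card_le_iff X).mpr hcard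
    exact le_trans (Nat.sInf_le ⟨r, X, hX, rfl⟩) (by omega)

end Width

namespace SimpleGraph

variable {ι : Type}

lemma reachable_of_induce_connected {G H : SimpleGraph ι} {A : Set ι}
    (hA : (G.induce A).Connected) (hGH : ∀ a ∈ A, ∀ b ∈ A, G.Adj a b → H.Adj a b)
    {a b : ι} (ha : a ∈ A) (hb : b ∈ A) : H.Reachable a b :=
  (hA.preconnected ⟨a, ha⟩ ⟨b, hb⟩).map ⟨Subtype.val, fun {x y} h => hGH _ x.2 _ y.2 h⟩

lemma exists_reachable_adj_of_induce_preconnected {T H : SimpleGraph ι} {S A : Set ι}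
    (hS : (T.induce S).Preconnected) {u₀ : ι} (hu₀S : u₀ ∈ S) (hu₀A : u₀ ∈ A)
    (hH : ∀ a b, a ∉ A → b ∉ A → T.Adj a b → H.Adj a b) (a : ↥(S \ A)) :
    ∃ p : ↥(S \ A), (∃ b ∈ A, T.Adj p b) ∧ (H.induce (S \ A)).Reachable a p := by
  obtain ⟨q⟩ := hS ⟨a, a.2.1⟩ ⟨u₀, hu₀S⟩
  suffices key : ∀ {x y : S} (q : (T.induce S).Walk x y), y.1 ∈ A → ∀ hx : x.1 ∉ A,
      ∃ p : ↥(S \ A), (∃ b ∈ A, T.Adj p b) ∧ (H.induce (S \ A)).Reachable ⟨x, x.2, hx⟩ p from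
    key q hu₀A a.2.2
  intro x y q hy hx
  induction q with
  | nil => exact absurd hy hx
  | @cons x m _ h q ih =>
    by_cases hm : m.1 ∈ A
    · exact ⟨⟨x, x.2, hx⟩, ⟨m, hm, h⟩, .refl _⟩
    · obtain ⟨p, hp, hmp⟩ := ih hy hm
      have hxm : (H.induce (S \ A)).Adj ⟨x, x.2, hx⟩ ⟨m, m.2, hm⟩ := hH _ _ hx hm h
      exact ⟨p, hp, hxm.reachable.trans hmp⟩

section Tree

variable {T : SimpleGraph ι}

lemma IsAcyclic.support_subset_of_isPath (hT : T.IsAcyclic) {S : Set ι}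
    (hS : (T.induce S).Preconnected) {x y : ι} (hx : x ∈ S) (hy : y ∈ S) {p : T.Walk x y}
    (hp : p.IsPath) : ∀ z ∈ p.support, z ∈ S := by
  classical
  obtain ⟨q⟩ := hS ⟨x, hx⟩ ⟨y, hy⟩
  set q' := q.map (Embedding.induce S).toHom
  have hpq : p = q'.bypass :=
    congrArg Subtype.val ((hT.subsingleton_path x y).elim ⟨p, hp⟩ ⟨_, q'.bypass_isPath⟩)
  intro z hz
  have hz' := q'.support_bypass_subset_support (hpq ▸ hz)
  rw [Walk.support_map] at hz'
  obtain ⟨z', -, rfl⟩ := List.mem_map.mp hz'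
  exact z'.2

lemma IsAcyclic.induce_inter_preconnected (hT : T.IsAcyclic) {S₁ S₂ : Set ι}
    (h₁ : (T.induce S₁).Preconnected) (h₂ : (T.induce S₂).Preconnected) :
    (T.induce (S₁ ∩ S₂)).Preconnected := by
  classical
  rintro ⟨x, hx₁, hx₂⟩ ⟨y, hy₁, hy₂⟩
  obtain ⟨q⟩ := h₁ ⟨x, hx₁⟩ ⟨y, hy₁⟩
  set p := (q.map (Embedding.induce S₁).toHom).bypass
  have hp : p.IsPath := Walk.bypass_isPath _
  exact (p.induce (S₁ ∩ S₂) fun z hz => ⟨hT.support_subset_of_isPath h₁ hx₁ hy₁ hp z hz,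
    hT.support_subset_of_isPath h₂ hx₂ hy₂ hp z hz⟩).reachable

end Tree

def cone (F : SimpleGraph ι) (R : Set ι) : SimpleGraph (Option ι) where
  Adj
    | some a, some b => F.Adj a b
    | some a, none => a ∈ R
    | none, some b => b ∈ R
    | none, none => False
  symm := ⟨by rintro (_ | a) (_ | b) h <;> first | exact h | exact h.symm⟩
  loopless := ⟨by rintro (_ | a) h <;> first | exact h | exact F.irrefl h⟩

section Cone

variable {F : SimpleGraph ι} {R : Set ι}

@[simp] lemma cone_adj_some_none {a : ι} : (F.cone R).Adj (some a) none ↔ a ∈ R := Iff.rfl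

@[simp] lemma cone_not_adj_none_none : ¬(F.cone R).Adj none none := id

def coneEmbedding (F : SimpleGraph ι) (R : Set ι) : F ↪g F.cone R :=
  ⟨.some, Iff.rfl⟩

lemma cone_reachable_none {a r : ι} (hr : r ∈ R) (h : F.Reachable a r) :
    (F.cone R).Reachable (some a) none :=
  (h.map (coneEmbedding F R).toHom).trans (Adj.reachable (cone_adj_some_none.mpr hr))

lemma exists_mem_edges_of_walk_none {a : ι} (p : (F.cone R).Walk (some a) none) :
    ∃ r ∈ R, F.Reachable a r ∧ s(some r, none) ∈ p.edges := by
  generalize hx : some a = x at p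
  generalize hy : (none : Option ι) = y at p
  induction p generalizing a with
  | nil => exact absurd (hx.trans hy.symm) (Option.some_ne_none a)
  | @cons x y _ h q ih =>
    subst hx hy
    cases y with
    | none => exact ⟨a, h, .refl a, by simp⟩
    | some b =>
      obtain ⟨r, hr, hbr, hq⟩ := ih rfl rfl
      exact ⟨r, hr, (Adj.reachable (G := F) h).trans hbr, by simp [hq]⟩

/-- A cycle through `none` leaves it towards some `a ∈ R` and returns through some `r ∈ R`
reachable from `a` in `F`; then `r = a`, so the cycle uses the edge `{a, none}` twice. -/
lemma isAcyclic_cone (hF : F.IsAcyclic)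
    (hR : ∀ r ∈ R, ∀ r' ∈ R, F.Reachable r r' → r = r') : (F.cone R).IsAcyclic := by
  classical
  intro x c hc
  by_cases hnone : none ∈ c.support
  · have hc' := hc.rotate hnone
    generalize c.rotate none hnone = c' at hc'
    cases c' with
    | nil => exact hc'.not_nil .nil
    | @cons _ y _ h p =>
      obtain ⟨-, hp⟩ := (Walk.cons_isCycle_iff p h).mp hc'
      cases y with
      | none => exact cone_not_adj_none_none h
      | some a =>
        obtain ⟨r, hr, har, hrp⟩ := exists_mem_edges_of_walk_none p
        obtain rfl := hR a h r hr har
        exact hp (Sym2.eq_swap ▸ hrp)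
  · have hrange : ∀ y ∈ c.support, y ∈ Set.range (coneEmbedding F R) := fun y hy =>
      Option.ne_none_iff_exists.mp (ne_of_mem_of_not_mem hy hnone)
    have hacyc := ((coneEmbedding F R).isoInduceRange).isAcyclic_iff.mp hF
    exact hacyc (c.induce _ hrange) (Walk.IsCycle.of_map (by rwa [Walk.map_induce]))

lemma isTree_cone (hF : F.IsAcyclic) (hreach : ∀ a, ∃ r ∈ R, F.Reachable a r)
    (hR : ∀ r ∈ R, ∀ r' ∈ R, F.Reachable r r' → r = r') : (F.cone R).IsTree := by
  refine ⟨(connected_iff_exists_forall_reachable _).mpr ⟨none, ?_⟩, isAcyclic_cone hF hR⟩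
  rintro (_ | a)
  · rfl
  · obtain ⟨r, hr, har⟩ := hreach a
    exact (cone_reachable_none hr har).symm

lemma cone_induce_image_connected {S : Set ι} (hS : (F.induce S).Connected) :
    ((F.cone R).induce (some '' S)).Connected :=
  hS.map (induceHom (coneEmbedding F R).toHom (Set.mapsTo_image _ S))
    (by rintro ⟨_, a, ha, rfl⟩; exact ⟨⟨a, ha⟩, rfl⟩)

lemma cone_induce_insert_none_connected {S : Set ι}
    (h : ∀ a : S, ∃ r : S, r.1 ∈ R ∧ (F.induce S).Reachable a r) :
    ((F.cone R).induce (insert none (some '' S))).Connected := by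
  refine (connected_iff_exists_forall_reachable _).mpr ⟨⟨none, .inl rfl⟩, ?_⟩
  rintro ⟨_ | a, ha⟩
  · rfl
  · have haS : a ∈ S := by simpa using ha
    obtain ⟨r, hr, har⟩ := h ⟨a, haS⟩
    have hmaps : Set.MapsTo some S (insert none (some '' S)) :=
      fun b hb => .inr (Set.mem_image_of_mem _ hb)
    have hr' : ((F.cone R).induce (insert none (some '' S))).Adj
        ⟨some r, hmaps r.2⟩ ⟨none, .inl rfl⟩ := hr
    exact ((har.map (induceHom (coneEmbedding F R).toHom hmaps)).trans hr'.reachable).symm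

end Cone

def deleteEdgesBetween (T : SimpleGraph ι) (P A : Set ι) : SimpleGraph ι where
  Adj a b := T.Adj a b ∧ ¬(a ∈ P ∧ b ∈ A) ∧ ¬(a ∈ A ∧ b ∈ P)
  symm := ⟨fun _ _ ⟨h, h₁, h₂⟩ => ⟨h.symm, fun h' => h₂ h'.symm, fun h' => h₁ h'.symm⟩⟩
  loopless := ⟨fun _ h => T.irrefl h.1⟩

section DeleteEdgesBetween

variable {T : SimpleGraph ι} {P A : Set ι} {u₀ : ι}

lemma deleteEdgesBetween_le : T.deleteEdgesBetween P A ≤ T := fun _ _ h => h.1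

lemma deleteEdgesBetween_adj_of_mem (hPA : Disjoint P A) {a b : ι} (ha : a ∈ A) (hb : b ∈ A)
    (h : T.Adj a b) : (T.deleteEdgesBetween P A).Adj a b :=
  ⟨h, fun h' => hPA.notMem_of_mem_right ha h'.1, fun h' => hPA.notMem_of_mem_right hb h'.2⟩

lemma exists_reachable_deleteEdgesBetween (hT : T.Connected) (hA : (T.induce A).Connected)
    (hu₀ : u₀ ∈ A) (hPA : Disjoint P A) (x : ι) :
    ∃ r ∈ insert u₀ P, (T.deleteEdgesBetween P A).Reachable x r := by
  have hreachA : ∀ a ∈ A, (T.deleteEdgesBetween P A).Reachable a u₀ := fun a ha =>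
    reachable_of_induce_connected hA (fun _ ha _ hb => deleteEdgesBetween_adj_of_mem hPA ha hb)
      ha hu₀
  suffices key : ∀ {x y : ι} (q : T.Walk x y), y ∈ A →
      ∃ r ∈ insert u₀ P, (T.deleteEdgesBetween P A).Reachable x r from
    key (hT.preconnected x u₀).some hu₀
  intro x y q hy
  induction q with
  | nil => exact ⟨u₀, .inl rfl, hreachA _ hy⟩
  | @cons x m _ h q ih =>
    by_cases hxm : (T.deleteEdgesBetween P A).Adj x m
    · obtain ⟨r, hr, hmr⟩ := ih hy
      exact ⟨r, hr, hxm.reachable.trans hmr⟩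
    · have hx : x ∈ P ∨ x ∈ A := by
        by_contra! hx
        exact hxm ⟨h, fun h' => hx.1 h'.1, fun h' => hx.2 h'.1⟩
      rcases hx with hx | hx
      exacts [⟨x, .inr hx, .refl x⟩, ⟨u₀, .inl rfl, hreachA x hx⟩]

/-- The edge from `p` to `A` is a bridge of the tree `T`, yet every other vertex of
`insert u₀ P` reaches `A` without it. -/
lemma not_reachable_deleteEdgesBetween (hT : T.IsTree) (hA : (T.induce A).Connected)
    (hu₀ : u₀ ∈ A) (hPA : Disjoint P A) (hP : ∀ p ∈ P, ∃ b ∈ A, T.Adj p b) {p r : ι}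
    (hp : p ∈ P) (hr : r ∈ insert u₀ P) (hpr : p ≠ r) :
    ¬(T.deleteEdgesBetween P A).Reachable p r := by
  obtain ⟨b, hb, hpb⟩ := hP p hp
  set D := T.deleteEdges {s(p, b)}
  have hbridge : ¬D.Reachable p b :=
    isBridge_iff.mp (isAcyclic_iff_forall_adj_isBridge.mp hT.isAcyclic hpb)
  have hpA : p ∉ A := hPA.notMem_of_mem_left hp
  have hD : ∀ {x y : ι}, T.Adj x y → x ≠ p → y ≠ p → D.Adj x y := fun h hx hy =>
    (deleteEdges_adj ..).mpr ⟨h, by simp only [Set.mem_singleton_iff, Sym2.eq_iff]; tauto⟩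
  have hreachA : ∀ a ∈ A, D.Reachable a b := fun a ha =>
    reachable_of_induce_connected hA (fun x hx _ hy h => hD h (ne_of_mem_of_not_mem hx hpA)
      (ne_of_mem_of_not_mem hy hpA)) ha hb
  have hrb : D.Reachable r b := by
    rcases hr with rfl | hr
    · exact hreachA r hu₀
    · obtain ⟨b', hb', hrb'⟩ := hP r hr
      exact (hD hrb' hpr.symm (ne_of_mem_of_not_mem hb' hpA)).reachable.trans (hreachA b' hb')
  have hFD : T.deleteEdgesBetween P A ≤ D := fun x y h =>
    (deleteEdges_adj ..).mpr ⟨h.1, by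
      simp only [Set.mem_singleton_iff, Sym2.eq_iff]
      rintro (⟨rfl, rfl⟩ | ⟨rfl, rfl⟩)
      exacts [h.2.1 ⟨hp, hb⟩, h.2.2 ⟨hb, hp⟩]⟩
  exact fun hpr' => hbridge ((hpr'.mono hFD).trans hrb)

lemma reachable_deleteEdgesBetween_eq (hT : T.IsTree) (hA : (T.induce A).Connected)
    (hu₀ : u₀ ∈ A) (hPA : Disjoint P A) (hP : ∀ p ∈ P, ∃ b ∈ A, T.Adj p b) {r r' : ι}
    (hr : r ∈ insert u₀ P) (hr' : r' ∈ insert u₀ P)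
    (h : (T.deleteEdgesBetween P A).Reachable r r') : r = r' := by
  by_contra hne
  rcases hr with rfl | hr
  · rcases hr' with rfl | hr'
    · exact hne rfl
    · exact not_reachable_deleteEdgesBetween hT hA hu₀ hPA hP hr' (.inl rfl) (Ne.symm hne) h.symm
  · exact not_reachable_deleteEdgesBetween hT hA hu₀ hPA hP hr hr' hne h

lemma isTree_cone_deleteEdgesBetween (hT : T.IsTree) (hA : (T.induce A).Connected)
    (hu₀ : u₀ ∈ A) (hPA : Disjoint P A) (hP : ∀ p ∈ P, ∃ b ∈ A, T.Adj p b) :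
    ((T.deleteEdgesBetween P A).cone (insert u₀ P)).IsTree :=
  isTree_cone (hT.isAcyclic.anti deleteEdgesBetween_le)
    (exists_reachable_deleteEdgesBetween hT.connected hA hu₀ hPA)
    (fun _ hr _ hr' => reachable_deleteEdgesBetween_eq hT hA hu₀ hPA hP hr hr')

end DeleteEdgesBetween

end SimpleGraph

lemma Set.OrdConnected.union_of_mem {α : Type} [LinearOrder α] {s t : Set α} {x : α}
    (hs : s.OrdConnected) (ht : t.OrdConnected) (hxs : x ∈ s) (hxt : x ∈ t) :
    (s ∪ t).OrdConnected :=
  (Set.ordConnected_iff_uIcc_subset_left (Set.mem_union_left t hxs)).mpr fun _ hy =>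
    hy.elim (fun hy => (hs.uIcc_subset hxs hy).trans Set.subset_union_left)
      (fun hy => (ht.uIcc_subset hxt hy).trans Set.subset_union_right)

lemma isPathDecomp_iff {V : Type} {r : ℕ} {G : SimpleGraph V} {X : Fin r → Finset V} :
    IsPathDecomp G X ↔ (∀ v, ∃ i, v ∈ X i) ∧ (∀ v w, G.Adj v w → ∃ i, v ∈ X i ∧ w ∈ X i) ∧
      ∀ x, {i | x ∈ X i}.OrdConnected := by
  refine and_congr_right' (and_congr_right' ⟨fun h x => ?_, fun h i j l hij hjl x hi hl => ?_⟩)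
  · refine Set.ordConnected_def.mpr fun i hi l hl j hj => ?_
    rcases hj.1.lt_or_eq with hij | rfl
    · rcases hj.2.lt_or_eq with hjl | rfl
      · exact h i j l hij hjl x hi hl
      · exact hl
    · exact hi
  · exact (h x).out hi hl ⟨hij.le, hjl.le⟩

@[simp] lemma subdiv_not_adj_none_none {V : Type} {G : SimpleGraph V} {v w : V} :
    ¬(subdiv G v w).Adj none none := id

section Contraction

variable {V : Type} [DecidableEq V] {G : SimpleGraph V} {v w : V} {κ : Type}
  {Y : κ → Finset (Option V)}

lemma mem_image_getD_iff {s : Finset (Option V)} {x : V} :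
    x ∈ s.image (·.getD w) ↔ some x ∈ s ∨ x = w ∧ none ∈ s := by
  constructor
  · rintro h
    obtain ⟨_ | a, ha, rfl⟩ := Finset.mem_image.mp h
    · exact .inr ⟨rfl, ha⟩
    · exact .inl ha
  · rintro (h | ⟨rfl, h⟩)
    exacts [Finset.mem_image_of_mem _ h, Finset.mem_image_of_mem _ h]

lemma exists_mem_image_getD (hcov : ∀ o, ∃ u, o ∈ Y u) (x : V) :
    ∃ u, x ∈ (Y u).image (·.getD w) :=
  (hcov (some x)).imp fun _ hu => mem_image_getD_iff.mpr (.inl hu)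

lemma exists_mem_image_getD_of_adj
    (hedge : ∀ o o', (subdiv G v w).Adj o o' → ∃ u, o ∈ Y u ∧ o' ∈ Y u) {a b : V}
    (hab : G.Adj a b) : ∃ u, a ∈ (Y u).image (·.getD w) ∧ b ∈ (Y u).image (·.getD w) := by
  by_cases hvw : a = v ∧ b = w ∨ a = w ∧ b = v
  · obtain ⟨u, hv, hnone⟩ := hedge (some v) none (.inl rfl)
    have hv' : v ∈ (Y u).image (·.getD w) := mem_image_getD_iff.mpr (.inl hv)
    have hw' : w ∈ (Y u).image (·.getD w) := mem_image_getD_iff.mpr (.inr ⟨rfl, hnone⟩)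
    rcases hvw with ⟨rfl, rfl⟩ | ⟨rfl, rfl⟩
    exacts [⟨u, hv', hw'⟩, ⟨u, hw', hv'⟩]
  · obtain ⟨u, ha, hb⟩ := hedge (some a) (some b) ⟨hab, by tauto, by tauto⟩
    exact ⟨u, mem_image_getD_iff.mpr (.inl ha), mem_image_getD_iff.mpr (.inl hb)⟩

lemma setOf_mem_image_getD_of_ne {x : V} (hx : x ≠ w) :
    {u | x ∈ (Y u).image (·.getD w)} = {u | some x ∈ Y u} := by
  ext u
  simp only [Set.mem_ofPred_eq, mem_image_getD_iff, hx, false_and, or_false]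

lemma setOf_mem_image_getD_self :
    {u | w ∈ (Y u).image (·.getD w)} = {u | some w ∈ Y u} ∪ {u | none ∈ Y u} := by
  ext u
  simp only [Set.mem_ofPred_eq, Set.mem_union, mem_image_getD_iff, true_and]

lemma IsTreeDecomp.contract {T : SimpleGraph κ} (h : IsTreeDecomp (subdiv G v w) T Y) :
    IsTreeDecomp G T fun u => (Y u).image (·.getD w) := by
  obtain ⟨hT, hcov, hedge, hconn⟩ := h
  refine ⟨hT, exists_mem_image_getD hcov, fun _ _ => exists_mem_image_getD_of_adj hedge,
    fun x => ?_⟩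
  rcases eq_or_ne x w with rfl | hx
  · obtain ⟨u, hnone, hx⟩ := hedge none (some x) (.inr rfl)
    rw [setOf_mem_image_getD_self]
    exact induce_union_connected (hconn _).preconnected (hconn none).preconnected ⟨u, hx, hnone⟩
  · rw [setOf_mem_image_getD_of_ne hx]
    exact hconn (some x)

lemma IsPathDecomp.contract {r : ℕ} {Y : Fin r → Finset (Option V)}
    (h : IsPathDecomp (subdiv G v w) Y) :
    IsPathDecomp G fun i => (Y i).image (·.getD w) := by
  obtain ⟨hcov, hedge, hconn⟩ := isPathDecomp_iff.mp h
  refine isPathDecomp_iff.mpr ⟨exists_mem_image_getD hcov,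
    fun _ _ => exists_mem_image_getD_of_adj hedge, fun x => ?_⟩
  rcases eq_or_ne x w with rfl | hx
  · obtain ⟨i, hnone, hx⟩ := hedge none (some x) (.inr rfl)
    rw [setOf_mem_image_getD_self]
    exact (hconn _).union_of_mem (hconn none) hx hnone
  · rw [setOf_mem_image_getD_of_ne hx]
    exact hconn (some x)

end Contraction

section PathExpansion

variable {V : Type} [DecidableEq V] {G : SimpleGraph V} {v w : V} {r : ℕ}

def subdivBags (X : Fin r → Finset V) (i₀ : Fin r) (i : Fin r) : Finset (Option V) :=
  if i = i₀ then insert none ((X i).map .some) else (X i).map .some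

@[simp] lemma some_mem_subdivBags {X : Fin r → Finset V} {i₀ i : Fin r} {x : V} :
    some x ∈ subdivBags X i₀ i ↔ x ∈ X i := by
  unfold subdivBags; split_ifs <;> simp

@[simp] lemma none_mem_subdivBags {X : Fin r → Finset V} {i₀ i : Fin r} :
    none ∈ subdivBags X i₀ i ↔ i = i₀ := by
  unfold subdivBags; split_ifs <;> simp [*]

lemma card_subdivBags_le (X : Fin r → Finset V) (i₀ i : Fin r) :
    (subdivBags X i₀ i).card ≤ (X i).card + 1 := by
  unfold subdivBags
  split_ifs
  · exact (Finset.card_insert_le _ _).trans_eq (by simp)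
  · simp

lemma IsPathDecomp.subdiv {X : Fin r → Finset V} (h : IsPathDecomp G X) {i₀ : Fin r}
    (hv : v ∈ X i₀) (hw : w ∈ X i₀) : IsPathDecomp (subdiv G v w) (subdivBags X i₀) := by
  obtain ⟨hcov, hedge, hconn⟩ := isPathDecomp_iff.mp h
  refine isPathDecomp_iff.mpr ⟨?_, ?_, ?_⟩
  · rintro (_ | x)
    · exact ⟨i₀, by simp⟩
    · simpa using hcov x
  · rintro (_ | a) (_ | b) hab
    · simp at hab
    · rcases hab with rfl | rfl <;> exact ⟨i₀, by simpa⟩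
    · rcases hab with rfl | rfl <;> exact ⟨i₀, by simpa⟩
    · simpa using hedge a b hab.1
  · rintro (_ | x)
    · simpa using Set.ordConnected_singleton
    · simpa using hconn x

end PathExpansion

lemma isTreeDecomp_of_connected {V ι : Type} {G : SimpleGraph V} {T : SimpleGraph ι}
    {X : ι → Finset V} (hT : T.IsTree) (hedge : ∀ v w, G.Adj v w → ∃ u, v ∈ X u ∧ w ∈ X u)
    (hconn : ∀ v, (T.induce {u | v ∈ X u}).Connected) : IsTreeDecomp G T X :=
  ⟨hT, fun v => (hconn v).nonempty.elim fun u => ⟨u, u.2⟩, hedge, hconn⟩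

section SubdivTreeDecomp

variable {V ι : Type} [DecidableEq V] {G : SimpleGraph V} {v w : V} {T : SimpleGraph ι}
  {X : ι → Finset V}

def splitBags (X : ι → Finset V) (v w : V) : Option ι → Finset (Option V)
  | none => {some w, none}
  | some u => if v ∈ X u ∧ w ∈ X u then {some v, none} else (X u).map .some

lemma setOf_none_mem_splitBags :
    {t | none ∈ splitBags X v w t} = insert none (some '' {u | v ∈ X u ∧ w ∈ X u}) := by
  ext (_ | u)
  · simp [splitBags]
  · by_cases hu : v ∈ X u ∧ w ∈ X u <;> simp [splitBags, hu]

lemma setOf_some_mem_splitBags_self (hvw : v ≠ w) :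
    {t | some w ∈ splitBags X v w t} =
      insert none (some '' ({u | w ∈ X u} \ {u | v ∈ X u ∧ w ∈ X u})) := by
  ext (_ | u)
  · simp [splitBags]
  · by_cases hu : v ∈ X u ∧ w ∈ X u
    · simp [splitBags, hu, hvw.symm]
    · simp [splitBags, hu]
      tauto

lemma setOf_some_mem_splitBags {x : V} (hx : x ≠ w)
    (hX : ∀ u, v ∈ X u → w ∈ X u → X u = {v, w}) :
    {t | some x ∈ splitBags X v w t} = some '' {u | x ∈ X u} := by
  ext (_ | u)
  · simp [splitBags, hx]
  · by_cases hu : v ∈ X u ∧ w ∈ X u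
    · simp [splitBags, hX u hu.1 hu.2, hx]
    · simp [splitBags, hu]

lemma exists_mem_splitBags_of_adj (hedge : ∀ a b, G.Adj a b → ∃ u, a ∈ X u ∧ b ∈ X u)
    {u₀ : ι} (hu₀ : v ∈ X u₀ ∧ w ∈ X u₀) (hX : ∀ u, v ∈ X u → w ∈ X u → X u = {v, w})
    {o o' : Option V} (h : (subdiv G v w).Adj o o') :
    ∃ t, o ∈ splitBags X v w t ∧ o' ∈ splitBags X v w t := by
  rcases o with _ | a <;> rcases o' with _ | b
  · exact (subdiv_not_adj_none_none h).elim
  · rcases h with rfl | rfl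
    exacts [⟨some u₀, by simp [splitBags, hu₀]⟩, ⟨none, by simp [splitBags]⟩]
  · rcases h with rfl | rfl
    exacts [⟨some u₀, by simp [splitBags, hu₀]⟩, ⟨none, by simp [splitBags]⟩]
  · obtain ⟨hab, hne₁, hne₂⟩ := h
    obtain ⟨u, ha, hb⟩ := hedge a b hab
    have hu : ¬(v ∈ X u ∧ w ∈ X u) := by
      rintro ⟨hv, hw⟩
      rw [hX u hv hw] at ha hb
      simp only [Finset.mem_insert, Finset.mem_singleton] at ha hb
      rcases ha with rfl | rfl <;> rcases hb with rfl | rfl <;> simp_all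
    exact ⟨some u, by simp [splitBags, hu, ha, hb]⟩

lemma IsTreeDecomp.subdiv_splitBags (h : IsTreeDecomp G T X) (hvw : G.Adj v w)
    (hX : ∀ u, (X u).card ≤ 2) :
    ∃ T' : SimpleGraph (Option ι), IsTreeDecomp (subdiv G v w) T' (splitBags X v w) := by
  obtain ⟨hT, -, hedge, hconn⟩ := h
  set A := {u | v ∈ X u ∧ w ∈ X u}
  set P := {p | p ∉ A ∧ w ∈ X p ∧ ∃ b ∈ A, T.Adj p b}
  obtain ⟨u₀, hu₀⟩ := hedge v w hvw
  have hXA : ∀ u, v ∈ X u → w ∈ X u → X u = {v, w} := fun u hv hw =>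
    (Finset.eq_of_subset_of_card_le (by simp [Finset.insert_subset_iff, hv, hw])
      ((hX u).trans_eq (Finset.card_pair hvw.ne).symm)).symm
  have hAconn : (T.induce A).Connected := (connected_iff _).mpr
    ⟨hT.isAcyclic.induce_inter_preconnected (hconn v).preconnected (hconn w).preconnected,
      ⟨⟨u₀, hu₀⟩⟩⟩
  have hPA : Disjoint P A := Set.disjoint_left.mpr fun _ hp => hp.1
  set F := T.deleteEdgesBetween P A
  refine ⟨F.cone (insert u₀ P), isTreeDecomp_of_connected
    (isTree_cone_deleteEdgesBetween hT hAconn hu₀ hPA fun _ hp => hp.2.2) ?_ ?_⟩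
  · exact fun _ _ => exists_mem_splitBags_of_adj hedge hu₀ hXA
  · rintro (_ | x)
    · rw [setOf_none_mem_splitBags]
      have hFA : (F.induce A).Connected :=
        hAconn.mono fun a b h => deleteEdgesBetween_adj_of_mem hPA a.2 b.2 h
      exact cone_induce_insert_none_connected fun a =>
        ⟨⟨u₀, hu₀⟩, .inl rfl, hFA.preconnected a _⟩
    · rcases eq_or_ne x w with rfl | hx
      · rw [setOf_some_mem_splitBags_self hvw.ne]
        refine cone_induce_insert_none_connected fun a => ?_
        obtain ⟨p, hp, hap⟩ := exists_reachable_adj_of_induce_preconnected (H := F)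
          (hconn x).preconnected hu₀.2 hu₀
          (fun a b ha hb h => ⟨h, fun h' => hb h'.2, fun h' => ha h'.1⟩) a
        exact ⟨p, .inr ⟨p.2.2, p.2.1, hp⟩, hap⟩
      · rw [setOf_some_mem_splitBags hx hXA]
        have hxv : ∀ u ∈ A, x ∈ X u → x = v := fun u hu hxu => by
          rw [hXA u hu.1 hu.2] at hxu
          simpa [hx] using hxu
        have hFx : (F.induce {u | x ∈ X u}).Connected := (hconn x).mono fun a b h =>
          ⟨h, fun ⟨hp, hb⟩ => hp.1 ⟨hxv b hb b.2 ▸ a.2, hp.2.1⟩,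
            fun ⟨ha, hp⟩ => hp.1 ⟨hxv a ha a.2 ▸ b.2, hp.2.1⟩⟩
        exact cone_induce_image_connected hFx

lemma card_splitBags_le (X : ι → Finset V) (v w : V) (hX : ∀ u, (X u).card ≤ 2) (t : Option ι) :
    (splitBags X v w t).card ≤ 2 := by
  rcases t with _ | u
  · exact Finset.card_le_two
  · dsimp only [splitBags]
    split_ifs
    exacts [Finset.card_le_two, (Finset.card_map _).trans_le (hX u)]

def leafBags (X : ι → Finset V) (v w : V) : Option ι → Finset (Option V)
  | none => {some v, some w, none}
  | some u => (X u).map .some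

lemma setOf_none_mem_leafBags : {t | none ∈ leafBags X v w t} = insert none (some '' ∅) := by
  ext (_ | u) <;> simp [leafBags]

lemma setOf_some_mem_leafBags_of_eq {x : V} (hx : x = v ∨ x = w) :
    {t | some x ∈ leafBags X v w t} = insert none (some '' {u | x ∈ X u}) := by
  ext (_ | u) <;> simp [leafBags, hx]

lemma setOf_some_mem_leafBags_of_ne {x : V} (hv : x ≠ v) (hw : x ≠ w) :
    {t | some x ∈ leafBags X v w t} = some '' {u | x ∈ X u} := by
  ext (_ | u) <;> simp [leafBags, hv, hw]

lemma IsTreeDecomp.subdiv_leafBags (h : IsTreeDecomp G T X) {u₀ : ι} (hv : v ∈ X u₀)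
    (hw : w ∈ X u₀) : IsTreeDecomp (subdiv G v w) (T.cone {u₀}) (leafBags X v w) := by
  obtain ⟨hT, -, hedge, hconn⟩ := h
  refine isTreeDecomp_of_connected (isTree_cone hT.isAcyclic
    (fun a => ⟨u₀, rfl, hT.connected.preconnected a u₀⟩) fun _ hr _ hr' _ => hr.trans hr'.symm)
    ?_ ?_
  · rintro (_ | a) (_ | b) hab
    · exact (subdiv_not_adj_none_none hab).elim
    · exact ⟨none, by simp [leafBags], by rcases hab with rfl | rfl <;> simp [leafBags]⟩
    · exact ⟨none, by rcases hab with rfl | rfl <;> simp [leafBags], by simp [leafBags]⟩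
    · obtain ⟨u, ha, hb⟩ := hedge a b hab.1
      exact ⟨some u, by simp [leafBags, ha], by simp [leafBags, hb]⟩
  · rintro (_ | x)
    · rw [setOf_none_mem_leafBags]
      exact cone_induce_insert_none_connected fun a => a.2.elim
    · by_cases hx : x = v ∨ x = w
      · rw [setOf_some_mem_leafBags_of_eq hx]
        have hx₀ : x ∈ X u₀ := by rcases hx with rfl | rfl <;> assumption
        exact cone_induce_insert_none_connected fun a =>
          ⟨⟨u₀, hx₀⟩, rfl, (hconn x).preconnected a _⟩
      · rw [not_or] at hx
        rw [setOf_some_mem_leafBags_of_ne hx.1 hx.2]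
        exact cone_induce_image_connected (hconn x)

lemma card_leafBags_le {n : ℕ} (hX : ∀ u, (X u).card ≤ n) (hn : 3 ≤ n) (t : Option ι) :
    (leafBags X v w t).card ≤ n := by
  rcases t with _ | u
  · exact Finset.card_le_three.trans hn
  · exact (Finset.card_map _).trans_le (hX u)

lemma exists_isTreeDecomp_subdiv (hvw : G.Adj v w) (h : IsTreeDecomp G T X) {k : ℕ}
    (hX : ∀ u, (X u).card ≤ k + 1) :
    ∃ (κ : Type) (T' : SimpleGraph κ) (Y : κ → Finset (Option V)),
      IsTreeDecomp (subdiv G v w) T' Y ∧ ∀ t, (Y t).card ≤ k + 1 := by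
  obtain ⟨u₀, hv, hw⟩ := h.2.2.1 v w hvw
  rcases le_or_gt 2 k with hk | hk
  · exact ⟨_, _, _, h.subdiv_leafBags hv hw, card_leafBags_le hX (by omega)⟩
  · have h2 : 2 ≤ k + 1 := by
      rw [← Finset.card_pair hvw.ne]
      exact (Finset.card_le_card (by simp [Finset.insert_subset_iff, hv, hw])).trans (hX u₀)
    have hX2 : ∀ u, (X u).card ≤ 2 := fun u => (hX u).trans (by omega)
    obtain ⟨T', hT'⟩ := h.subdiv_splitBags hvw hX2
    exact ⟨_, T', _, hT', fun t => (card_splitBags_le X v w hX2 t).trans h2⟩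

end SubdivTreeDecomp

section Assembly

variable {V : Type} [Fintype V] {G : SimpleGraph V} {v w : V}

lemma treewidth_le_treewidth_subdiv : treewidth G ≤ treewidth (subdiv G v w) := by
  classical
  obtain ⟨ι, T, Y, hY, hcard⟩ := (treewidth_le_iff (G := subdiv G v w)).mp le_rfl
  exact treewidth_le_iff.mpr ⟨ι, T, _, hY.contract, fun u => Finset.card_image_le.trans (hcard u)⟩

lemma treewidth_subdiv_le (hvw : G.Adj v w) : treewidth (subdiv G v w) ≤ treewidth G := by
  classical
  obtain ⟨ι, T, X, hX, hcard⟩ := (treewidth_le_iff (G := G)).mp le_rfl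
  exact treewidth_le_iff.mpr (exists_isTreeDecomp_subdiv hvw hX hcard)

lemma pathwidth_le_pathwidth_subdiv : pathwidth G ≤ pathwidth (subdiv G v w) := by
  classical
  obtain ⟨r, Y, hY, hcard⟩ := (pathwidth_le_iff (G := subdiv G v w)).mp le_rfl
  exact pathwidth_le_iff.mpr ⟨r, _, hY.contract, fun i => Finset.card_image_le.trans (hcard i)⟩

lemma pathwidth_subdiv_le (hvw : G.Adj v w) : pathwidth (subdiv G v w) ≤ pathwidth G + 1 := by
  classical
  obtain ⟨r, X, hX, hcard⟩ := (pathwidth_le_iff (G := G)).mp le_rfl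
  obtain ⟨i₀, hv, hw⟩ := hX.2.1 v w hvw
  exact pathwidth_le_iff.mpr ⟨r, _, hX.subdiv hv hw, fun i =>
    (card_subdivBags_le X i₀ i).trans (Nat.add_le_add_right (hcard i) 1)⟩

end Assembly

/-- Subdividing an edge `{v, w}` leaves the tree-width unchanged and increases the
path-width by at most one (and never decreases it). -/
theorem treewidth_pathwidth_subdiv
    {V : Type} [Fintype V] (G : SimpleGraph V) (v w : V) (h : G.Adj v w) :
    treewidth (subdiv G v w) = treewidth G ∧
    (pathwidth G ≤ pathwidth (subdiv G v w) ∧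
      pathwidth (subdiv G v w) ≤ pathwidth G + 1) :=
  ⟨(treewidth_subdiv_le h).antisymm treewidth_le_treewidth_subdiv,
    pathwidth_le_pathwidth_subdiv, pathwidth_subdiv_le h⟩
end

section
/- For every d ≥ 1 and every finite simple graph G, it holds that tw(G) ≤ tw(G^d) ≤ (tw(G) + 1)·(1 + Δ(G)·Σ_{i=0}^{d−1} (Δ(G) − 1)^i) − 1 and pw(G) ≤ pw(G^d) ≤ (pw(G) + 1)·(1 + Δ(G)·Σ_{i=0}^{d−1} (Δ(G) − 1)^i) − 1, where G^d is the d-th power of G and Δ(G) is the maximum degree of G. -/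
open SimpleGraph

/-- `graphPow G d` is the `d`-th power `G^d` of `G`: two distinct vertices are adjacent
iff there is a path of length at most `d` between them in `G`. -/
def graphPow {V : Type} (G : SimpleGraph V) (d : ℕ) : SimpleGraph V where
  Adj x y := x ≠ y ∧ ∃ p : G.Path x y, p.1.length ≤ d
  symm := by
    constructor
    rintro x y ⟨hxy, p, hp⟩
    exact ⟨hxy.symm, ⟨p.1.reverse, p.2.reverse⟩, by simpa using hp⟩
  loopless := by
    constructor
    rintro x ⟨hxx, _⟩
    exact hxx rfl

/-! If `(T, X)` is a tree- or path-decomposition of `G`, replacing every bag `X u` by the union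
of the closed balls of radius `d` around its vertices gives a decomposition of `G^d` over the same
tree or path: the new bags containing `v` are the old bags meeting the ball around `v`, and a walk
of length at most `d` through that ball keeps them connected. In a graph of maximum degree `Δ`
a closed ball of radius `d` has at most `1 + Δ·Σ_{i<d} (Δ-1)^i` vertices. The lower bounds hold because `G ≤ G^d` and both widths are monotone under subgraphs. -/

open Finset

namespace SimpleGraph

variable {V : Type} [Fintype V] {G : SimpleGraph V}

variable (G) in
open Classical in
noncomputable def closedBall (v : V) (r : ℕ) : Finset V :=
  {z | ∃ p : G.Walk v z, p.length ≤ r}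

lemma mem_closedBall {v z : V} {r : ℕ} :
    z ∈ G.closedBall v r ↔ ∃ p : G.Walk v z, p.length ≤ r := by
  classical
  simp [closedBall]

lemma closedBall_zero (v : V) : G.closedBall v 0 = {v} := by
  ext z
  simp only [mem_closedBall, Nat.le_zero, Finset.mem_singleton]
  exact ⟨fun ⟨p, hp⟩ => (Walk.eq_of_length_eq_zero hp).symm, fun h => h ▸ ⟨Walk.nil, rfl⟩⟩

lemma closedBall_mono (v : V) {r r' : ℕ} (h : r ≤ r') : G.closedBall v r ⊆ G.closedBall v r' :=
  fun _ hz => have ⟨p, hp⟩ := mem_closedBall.1 hz; mem_closedBall.2 ⟨p, hp.trans h⟩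

lemma exists_adj_of_mem_closedBall_succ {v z : V} {r : ℕ} (hz : z ∈ G.closedBall v (r + 1))
    (hz' : z ∉ G.closedBall v r) : ∃ y ∈ G.closedBall v r, G.Adj y z := by
  obtain ⟨p, hp⟩ := mem_closedBall.1 hz
  have hlong : r < p.length := not_le.1 fun h => hz' (mem_closedBall.2 ⟨p, h⟩)
  have hnil : ¬p.Nil := fun h => by simp [h.length_eq_zero] at hlong
  refine ⟨p.penultimate, mem_closedBall.2 ⟨p.dropLast, ?_⟩, p.adj_penultimate hnil⟩
  rw [Walk.length_dropLast]
  omega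

variable [DecidableEq V]

lemma mem_closedBall_of_mem_support {w v z : V} {p : G.Walk w v} {r : ℕ} (hp : p.length ≤ r)
    (hz : z ∈ p.support) : v ∈ G.closedBall z r :=
  mem_closedBall.2 ⟨p.dropUntil z hz, (p.length_dropUntil_le_length hz).trans hp⟩

variable [DecidableRel G.Adj]

lemma card_closedBall_one_sdiff_le (v : V) :
    #(G.closedBall v 1 \ G.closedBall v 0) ≤ G.maxDegree := by
  refine (Finset.card_le_card fun z hz => ?_).trans (G.degree_le_maxDegree v)
  obtain ⟨hz1, hz0⟩ := Finset.mem_sdiff.1 hz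
  obtain ⟨y, hy, hyz⟩ := exists_adj_of_mem_closedBall_succ hz1 hz0
  rw [closedBall_zero, Finset.mem_singleton] at hy
  exact (G.mem_neighborFinset _ _).2 (hy ▸ hyz)

/-- Each vertex at distance `r + 1 ≥ 1` from `v` has a neighbour at distance `r`, so at most
`Δ - 1` of its neighbours lie at distance `r + 2`. -/
lemma card_closedBall_sdiff_succ_le (v : V) (r : ℕ) :
    #(G.closedBall v (r + 2) \ G.closedBall v (r + 1)) ≤
      (G.maxDegree - 1) * #(G.closedBall v (r + 1) \ G.closedBall v r) := by
  have hpred : ∀ z ∈ G.closedBall v (r + 2) \ G.closedBall v (r + 1),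
      ∃ y ∈ G.closedBall v (r + 1) \ G.closedBall v r, G.Adj y z := by
    intro z hz
    obtain ⟨hz2, hz1⟩ := Finset.mem_sdiff.1 hz
    obtain ⟨y, hy, hyz⟩ := exists_adj_of_mem_closedBall_succ hz2 hz1
    refine ⟨y, Finset.mem_sdiff.2 ⟨hy, fun hyr => hz1 ?_⟩, hyz⟩
    obtain ⟨p, hp⟩ := mem_closedBall.1 hyr
    exact mem_closedBall.2 ⟨p.concat hyz, by simp [hp]⟩
  choose! pred hpred_mem hpred_adj using hpred
  refine Finset.card_le_mul_card_image_of_maps_to hpred_mem _ fun y hy => ?_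
  obtain ⟨hy1, hy0⟩ := Finset.mem_sdiff.1 hy
  obtain ⟨x, hx, hxy⟩ := exists_adj_of_mem_closedBall_succ hy1 hy0
  have hsub : {z ∈ G.closedBall v (r + 2) \ G.closedBall v (r + 1) | pred z = y} ⊆
      (G.neighborFinset y).erase x := by
    intro z hz
    obtain ⟨hz', rfl⟩ := Finset.mem_filter.1 hz
    refine Finset.mem_erase.2 ⟨?_, (G.mem_neighborFinset _ _).2 (hpred_adj z hz')⟩
    rintro rfl
    exact (Finset.mem_sdiff.1 hz').2 (closedBall_mono v r.le_succ hx)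
  calc _ ≤ #((G.neighborFinset y).erase x) := Finset.card_le_card hsub
    _ = G.degree y - 1 := Finset.card_erase_of_mem ((G.mem_neighborFinset _ _).2 hxy.symm)
    _ ≤ G.maxDegree - 1 := Nat.sub_le_sub_right (G.degree_le_maxDegree y) 1

lemma card_closedBall_succ_sdiff_le (v : V) (r : ℕ) :
    #(G.closedBall v (r + 1) \ G.closedBall v r) ≤ G.maxDegree * (G.maxDegree - 1) ^ r := by
  induction r with
  | zero => simpa using card_closedBall_one_sdiff_le v
  | succ r ih =>
    calc _ ≤ (G.maxDegree - 1) * #(G.closedBall v (r + 1) \ G.closedBall v r) :=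
          card_closedBall_sdiff_succ_le v r
      _ ≤ (G.maxDegree - 1) * (G.maxDegree * (G.maxDegree - 1) ^ r) := Nat.mul_le_mul_left _ ih
      _ = G.maxDegree * (G.maxDegree - 1) ^ (r + 1) := by ring

lemma card_closedBall_le (v : V) (r : ℕ) :
    #(G.closedBall v r) ≤ 1 + G.maxDegree * ∑ i ∈ Finset.range r, (G.maxDegree - 1) ^ i := by
  induction r with
  | zero => simp [closedBall_zero (G := G)]
  | succ r ih =>
    rw [← Finset.card_sdiff_add_card_eq_card (closedBall_mono v r.le_succ), Finset.sum_range_succ]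
    have := card_closedBall_succ_sdiff_le (G := G) v r
    linarith

end SimpleGraph

lemma le_graphPow {V : Type} {G : SimpleGraph V} {d : ℕ} (hd : 1 ≤ d) : G ≤ graphPow G d :=
  fun _ _ h => ⟨h.ne, Path.singleton h, by simpa using hd⟩

section Thicken

variable {V ι : Type} [Fintype V] [DecidableEq V]

noncomputable def thicken (G : SimpleGraph V) (d : ℕ) (X : ι → Finset V) (u : ι) : Finset V :=
  (X u).biUnion (G.closedBall · d)

variable {G : SimpleGraph V} {d : ℕ} {X : ι → Finset V} {u : ι}

lemma mem_thicken {v : V} : v ∈ thicken G d X u ↔ ∃ w ∈ X u, v ∈ G.closedBall w d :=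
  Finset.mem_biUnion

lemma subset_thicken : X u ⊆ thicken G d X u :=
  fun v hv => mem_thicken.2 ⟨v, hv, mem_closedBall.2 ⟨Walk.nil, Nat.zero_le d⟩⟩

lemma mem_thicken_of_graphPow_adj {x y : V} (hx : x ∈ X u) (hxy : (graphPow G d).Adj x y) :
    y ∈ thicken G d X u :=
  have ⟨_, p, hp⟩ := hxy
  mem_thicken.2 ⟨x, hx, mem_closedBall.2 ⟨p, hp⟩⟩

lemma mem_thicken_of_mem_support_append {w w' v z : V} {q : G.Walk w v} {q' : G.Walk w' v}
    (hq : q.length ≤ d) (hq' : q'.length ≤ d) (hz : z ∈ (q.append q'.reverse).support)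
    (hzu : z ∈ X u) : v ∈ thicken G d X u := by
  refine mem_thicken.2 ⟨z, hzu, ?_⟩
  rw [Walk.mem_support_append_iff, Walk.support_reverse, List.mem_reverse] at hz
  exact hz.elim (mem_closedBall_of_mem_support hq) (mem_closedBall_of_mem_support hq')

variable (G d) in
lemma card_thicken_le [DecidableRel G.Adj] (u : ι) :
    #(thicken G d X u) ≤
      #(X u) * (1 + G.maxDegree * ∑ i ∈ Finset.range d, (G.maxDegree - 1) ^ i) :=
  Finset.card_biUnion_le_card_mul _ _ _ fun w _ => card_closedBall_le w d

end Thicken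

section TreeDecomp

variable {V ι : Type} {G H : SimpleGraph V} {T : SimpleGraph ι} {X : ι → Finset V}

lemma IsTreeDecomp.mono (hX : IsTreeDecomp H T X) (h : G ≤ H) : IsTreeDecomp G T X :=
  ⟨hX.1, hX.2.1, fun v w hvw => hX.2.2.1 v w (h hvw), hX.2.2.2⟩

lemma IsTreeDecomp.connected_induce_support (hX : IsTreeDecomp G T X) {w w' : V}
    (p : G.Walk w w') : (T.induce {u | ∃ z ∈ p.support, z ∈ X u}).Connected := by
  induction p with
  | @nil a =>
    have hnil : {u | ∃ z ∈ (Walk.nil : G.Walk a a).support, z ∈ X u} = {u | a ∈ X u} := by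
      ext; simp
    exact hnil ▸ hX.2.2.2 a
  | @cons a b _ hab q ih =>
    obtain ⟨m, hma, hmb⟩ := hX.2.2.1 a b hab
    have hsplit : {u | ∃ z ∈ (Walk.cons hab q).support, z ∈ X u} =
        {u | a ∈ X u} ∪ {u | ∃ z ∈ q.support, z ∈ X u} := by
      ext; simp
    rw [hsplit]
    exact induce_union_connected (hX.2.2.2 a).preconnected ih.preconnected
      ⟨m, hma, b, q.start_mem_support, hmb⟩

lemma IsTreeDecomp.thicken [Fintype V] [DecidableEq V] (hX : IsTreeDecomp G T X) (d : ℕ) :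
    IsTreeDecomp (graphPow G d) T (_root_.thicken G d X) := by
  refine ⟨hX.1, fun v => ?_, fun x y hxy => ?_, fun v => ?_⟩
  · obtain ⟨u, hu⟩ := hX.2.1 v
    exact ⟨u, subset_thicken hu⟩
  · obtain ⟨u, hu⟩ := hX.2.1 x
    exact ⟨u, subset_thicken hu, mem_thicken_of_graphPow_adj hu hxy⟩
  · obtain ⟨u₀, hu₀⟩ := hX.2.1 v
    have : Nonempty {u | v ∈ _root_.thicken G d X u} := ⟨⟨u₀, subset_thicken hu₀⟩⟩
    refine ⟨fun ⟨a, ha⟩ ⟨b, hb⟩ => ?_⟩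
    obtain ⟨w, hw, hq⟩ := mem_thicken.1 ha
    obtain ⟨w', hw', hq'⟩ := mem_thicken.1 hb
    obtain ⟨q, hq⟩ := mem_closedBall.1 hq
    obtain ⟨q', hq'⟩ := mem_closedBall.1 hq'
    let P := q.append q'.reverse
    have hsub : {u | ∃ z ∈ P.support, z ∈ X u} ⊆ {u | v ∈ _root_.thicken G d X u} :=
      fun u ⟨z, hz, hzu⟩ => mem_thicken_of_mem_support_append hq hq' hz hzu
    exact ((hX.connected_induce_support P).preconnected ⟨a, w, P.start_mem_support, hw⟩
      ⟨b, w', P.end_mem_support, hw'⟩).map (T.induceHomOfLE hsub).toHom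

end TreeDecomp

section PathDecomp

variable {V : Type} {r : ℕ} {G H : SimpleGraph V} {X : Fin r → Finset V}

lemma IsPathDecomp.mono (hX : IsPathDecomp H X) (h : G ≤ H) : IsPathDecomp G X :=
  ⟨hX.1, fun v w hvw => hX.2.1 v w (h hvw), hX.2.2⟩

lemma IsPathDecomp.mem_of_le_of_le (hX : IsPathDecomp G X) {i j l : Fin r} (hij : i ≤ j)
    (hjl : j ≤ l) {x : V} (hxi : x ∈ X i) (hxl : x ∈ X l) : x ∈ X j := by
  rcases hij.eq_or_lt with rfl | hij
  · exact hxi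
  rcases hjl.eq_or_lt with rfl | hjl
  · exact hxl
  exact hX.2.2 i j l hij hjl x hxi hxl

lemma IsPathDecomp.exists_mem_support_mem (hX : IsPathDecomp G X) {w w' : V} (p : G.Walk w w')
    {i j l : Fin r} (hij : i ≤ j) (hjl : j ≤ l) (hw : w ∈ X i) (hw' : w' ∈ X l) :
    ∃ z ∈ p.support, z ∈ X j := by
  induction p generalizing i with
  | @nil a => exact ⟨a, Walk.start_mem_support _, hX.mem_of_le_of_le hij hjl hw hw'⟩
  | @cons a b _ hab q ih =>
    obtain ⟨m, hma, hmb⟩ := hX.2.1 a b hab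
    by_cases hjm : j ≤ m
    · exact ⟨a, Walk.start_mem_support _, hX.mem_of_le_of_le hij hjm hw hma⟩
    · obtain ⟨z, hz, hzj⟩ := ih (not_le.1 hjm).le hmb hw'
      exact ⟨z, List.mem_cons_of_mem _ hz, hzj⟩

lemma IsPathDecomp.thicken [Fintype V] [DecidableEq V] (hX : IsPathDecomp G X) (d : ℕ) :
    IsPathDecomp (graphPow G d) (_root_.thicken G d X) := by
  refine ⟨fun v => ?_, fun x y hxy => ?_, fun i j l hij hjl v hvi hvl => ?_⟩
  · obtain ⟨u, hu⟩ := hX.1 v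
    exact ⟨u, subset_thicken hu⟩
  · obtain ⟨u, hu⟩ := hX.1 x
    exact ⟨u, subset_thicken hu, mem_thicken_of_graphPow_adj hu hxy⟩
  · obtain ⟨w, hw, hq⟩ := mem_thicken.1 hvi
    obtain ⟨w', hw', hq'⟩ := mem_thicken.1 hvl
    obtain ⟨q, hq⟩ := mem_closedBall.1 hq
    obtain ⟨q', hq'⟩ := mem_closedBall.1 hq'
    obtain ⟨z, hz, hzj⟩ := hX.exists_mem_support_mem (q.append q'.reverse) hij.le hjl.le hw hw'
    exact mem_thicken_of_mem_support_append hq hq' hz hzj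

end PathDecomp

section Width

variable {V : Type} {G H : SimpleGraph V}

lemma treewidth_le_of_isTreeDecomp {ι : Type} {T : SimpleGraph ι} {X : ι → Finset V}
    (hX : IsTreeDecomp G T X) {m : ℕ} (hm : ∀ u, #(X u) ≤ m) : treewidth G ≤ m - 1 :=
  (Nat.sInf_le ⟨ι, T, X, hX, rfl⟩ : treewidth G ≤ _).trans
    (Nat.sub_le_sub_right (csSup_le' (Set.forall_mem_range.2 hm)) 1)

lemma pathwidth_le_of_isPathDecomp {r : ℕ} {X : Fin r → Finset V} (hX : IsPathDecomp G X)
    {m : ℕ} (hm : ∀ i, #(X i) ≤ m) : pathwidth G ≤ m - 1 :=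
  (Nat.sInf_le ⟨r, X, hX, rfl⟩ : pathwidth G ≤ _).trans
    (Nat.sub_le_sub_right (csSup_le' (Set.forall_mem_range.2 hm)) 1)

variable [Fintype V]

lemma card_le_sSup_range_card {ι : Type} (X : ι → Finset V) (u : ι) :
    #(X u) ≤ sSup (Set.range fun u => #(X u)) :=
  le_csSup ⟨Fintype.card V, Set.forall_mem_range.2 fun _ => Finset.card_le_univ _⟩ ⟨u, rfl⟩

lemma isTreeDecomp_univ (G : SimpleGraph V) :
    IsTreeDecomp G (⊥ : SimpleGraph Unit) fun _ => Finset.univ := by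
  refine ⟨.of_subsingleton, fun v => ⟨(), Finset.mem_univ v⟩,
    fun v w _ => ⟨(), Finset.mem_univ v, Finset.mem_univ w⟩, fun v => ?_⟩
  have : Nonempty {u : Unit | v ∈ Finset.univ} := ⟨⟨(), Finset.mem_univ v⟩⟩
  exact .of_subsingleton

lemma isPathDecomp_univ (G : SimpleGraph V) : IsPathDecomp G fun _ : Fin 1 => Finset.univ :=
  ⟨fun v => ⟨0, Finset.mem_univ v⟩, fun v w _ => ⟨0, Finset.mem_univ v, Finset.mem_univ w⟩,
    fun i j l hij hjl => absurd (hij.trans hjl) (by simp [Subsingleton.elim i l])⟩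

lemma exists_isTreeDecomp_card_le_treewidth_add_one (G : SimpleGraph V) :
    ∃ (ι : Type) (T : SimpleGraph ι) (X : ι → Finset V),
      IsTreeDecomp G T X ∧ ∀ u, #(X u) ≤ treewidth G + 1 := by
  obtain ⟨ι, T, X, hX, hwidth⟩ : treewidth G ∈ _ :=
    Nat.sInf_mem ⟨_, Unit, ⊥, _, isTreeDecomp_univ G, rfl⟩
  refine ⟨ι, T, X, hX, fun u => ?_⟩
  have := card_le_sSup_range_card X u
  omega

lemma exists_isPathDecomp_card_le_pathwidth_add_one (G : SimpleGraph V) :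
    ∃ (r : ℕ) (X : Fin r → Finset V), IsPathDecomp G X ∧ ∀ i, #(X i) ≤ pathwidth G + 1 := by
  obtain ⟨r, X, hX, hwidth⟩ : pathwidth G ∈ _ := Nat.sInf_mem ⟨_, 1, _, isPathDecomp_univ G, rfl⟩
  refine ⟨r, X, hX, fun i => ?_⟩
  have := card_le_sSup_range_card X i
  omega

lemma treewidth_mono (h : G ≤ H) : treewidth G ≤ treewidth H := by
  obtain ⟨ι, T, X, hX, hcard⟩ := exists_isTreeDecomp_card_le_treewidth_add_one H
  simpa using treewidth_le_of_isTreeDecomp (hX.mono h) hcard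

lemma pathwidth_mono (h : G ≤ H) : pathwidth G ≤ pathwidth H := by
  obtain ⟨r, X, hX, hcard⟩ := exists_isPathDecomp_card_le_pathwidth_add_one H
  simpa using pathwidth_le_of_isPathDecomp (hX.mono h) hcard

variable [DecidableRel G.Adj]

lemma treewidth_graphPow_le (d : ℕ) :
    treewidth (graphPow G d) ≤
      (treewidth G + 1) * (1 + G.maxDegree * ∑ i ∈ Finset.range d, (G.maxDegree - 1) ^ i) - 1 := by
  classical
  obtain ⟨ι, T, X, hX, hcard⟩ := exists_isTreeDecomp_card_le_treewidth_add_one G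
  exact treewidth_le_of_isTreeDecomp (hX.thicken d) fun u =>
    (card_thicken_le G d u).trans (Nat.mul_le_mul_right _ (hcard u))

lemma pathwidth_graphPow_le (d : ℕ) :
    pathwidth (graphPow G d) ≤
      (pathwidth G + 1) * (1 + G.maxDegree * ∑ i ∈ Finset.range d, (G.maxDegree - 1) ^ i) - 1 := by
  classical
  obtain ⟨r, X, hX, hcard⟩ := exists_isPathDecomp_card_le_pathwidth_add_one G
  exact pathwidth_le_of_isPathDecomp (hX.thicken d) fun i =>
    (card_thicken_le G d i).trans (Nat.mul_le_mul_right _ (hcard i))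

end Width

/-- For `d ≥ 1` and a finite simple graph `G`:
`tw(G) ≤ tw(G^d) ≤ (tw(G) + 1)·(1 + Δ(G)·Σ_{i=0}^{d−1}(Δ(G) − 1)^i) − 1` and
`pw(G) ≤ pw(G^d) ≤ (pw(G) + 1)·(1 + Δ(G)·Σ_{i=0}^{d−1}(Δ(G) − 1)^i) − 1`. -/
theorem treewidth_pathwidth_graphPow
    {V : Type} [Fintype V] (G : SimpleGraph V) [DecidableRel G.Adj]
    (d : ℕ) (hd : 1 ≤ d) :
    (treewidth G ≤ treewidth (graphPow G d) ∧
      treewidth (graphPow G d) ≤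
        (treewidth G + 1) *
          (1 + G.maxDegree * ∑ i ∈ Finset.range d, (G.maxDegree - 1) ^ i) - 1) ∧
    (pathwidth G ≤ pathwidth (graphPow G d) ∧
      pathwidth (graphPow G d) ≤
        (pathwidth G + 1) *
          (1 + G.maxDegree * ∑ i ∈ Finset.range d, (G.maxDegree - 1) ^ i) - 1) :=
  ⟨⟨treewidth_mono (le_graphPow hd), treewidth_graphPow_le d⟩,
    ⟨pathwidth_mono (le_graphPow hd), pathwidth_graphPow_le d⟩⟩
end
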